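/- Let E ∈ M_n(T) be a full rank tropical idempotent. Then the set of monomial matrices P with C(PE) = C(E) coincides with the set of monomial matrices that commute with E (PE = EP). -/

import Mathlib

/-!
If `E` is a full rank idempotent with `n ≥ 2`, idempotency gives the triangle inequality
`E i k + E k j ≤ E i j`, and full rank forces `E i i = 0` and `E i j + E j i < 0` for `i ≠ j`,
since otherwise some column would be a combination of the others. A column of `E` with a zero
diagonal entry is extremal in the fixed-point semimodule of `E`, which contains `C(E)`. So if
`P` has permutation `σ`, weights `a`, and `C(PE) = C(E)`, every column `k` of `E` is a multiple
`μ k` of a column `g k` of `PE`, and `g` is a permutation. Comparing the weights of the permutations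
`σ⁻¹g` and `σg⁻¹` in `E` (every permutation other than the identity has negative weight) gives
`g = σ` and `μ = -a`, i.e. `PE = EP`. Conversely `C(EP) = C(E)` for every monomial `P`.
-/

open scoped Classical

/-- The tropical (max-plus) semiring carrier: `ℝ ∪ {-∞}`, where `⊔` is tropical
addition (max) and `+` is tropical multiplication (with `⊥ = -∞` absorbing). -/
abbrev Trop : Type := WithBot ℝ

/-- Tropical matrix multiplication: `(A ⊗ B) i j = max_k (A i k + B k j)`. -/
def tmul {n m p : ℕ} (A : Fin n → Fin m → Trop) (B : Fin m → Fin p → Trop) :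
    Fin n → Fin p → Trop :=
  fun i j => Finset.univ.sup fun k => A i k + B k j

/-- Tropical matrix-vector multiplication (column vector on the right). -/
def tvmul {n m : ℕ} (A : Fin n → Fin m → Trop) (v : Fin m → Trop) : Fin n → Trop :=
  fun i => Finset.univ.sup fun k => A i k + v k

/-- Tropical vector-matrix multiplication (row vector on the left). -/
def vtmul {n m : ℕ} (v : Fin n → Trop) (A : Fin n → Fin m → Trop) : Fin m → Trop :=
  fun j => Finset.univ.sup fun k => v k + A k j

/-- The tropical identity matrix: `0` on the diagonal, `-∞` elsewhere. -/
def tId (n : ℕ) : Fin n → Fin n → Trop :=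
  fun i j => if i = j then ((0 : ℝ) : Trop) else ⊥

/-- A monomial matrix: exactly one entry different from `-∞` in each row and each column. -/
def IsMonomial {n : ℕ} (P : Fin n → Fin n → Trop) : Prop :=
  (∀ i, ∃! j, P i j ≠ ⊥) ∧ (∀ j, ∃! i, P i j ≠ ⊥)

/-- A `T`-subsemimodule of `T^n`: closed under tropical addition (max) and scaling. -/
def IsTropSubmodule {n : ℕ} (S : Set (Fin n → Trop)) : Prop :=
  (∀ x ∈ S, ∀ y ∈ S, x ⊔ y ∈ S) ∧
  (∀ c : Trop, ∀ x ∈ S, (fun i => c + x i) ∈ S)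

/-- The `T`-subsemimodule generated by a set of vectors. -/
def genBy {n : ℕ} (G : Set (Fin n → Trop)) : Set (Fin n → Trop) :=
  ⋂₀ {S | IsTropSubmodule S ∧ G ⊆ S}

/-- The column space of a tropical matrix. -/
def colSpace {n m : ℕ} (A : Fin n → Fin m → Trop) : Set (Fin n → Trop) :=
  genBy {v | ∃ j, v = fun i => A i j}

/-- The row space of a tropical matrix. -/
def rowSpace {n m : ℕ} (A : Fin n → Fin m → Trop) : Set (Fin m → Trop) :=
  genBy {v | ∃ i, v = fun j => A i j}

/-- The column rank: minimum cardinality of a generating set of the column space. -/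
noncomputable def colRank {n m : ℕ} (A : Fin n → Fin m → Trop) : ℕ :=
  sInf {k | ∃ G : Finset (Fin n → Trop), G.card = k ∧ genBy (↑G) = colSpace A}

/-- The row rank: minimum cardinality of a generating set of the row space. -/
noncomputable def rowRank {n m : ℕ} (A : Fin n → Fin m → Trop) : ℕ :=
  sInf {k | ∃ G : Finset (Fin m → Trop), G.card = k ∧ genBy (↑G) = rowSpace A}

/-- Isomorphism of tropical subsemimodules (given by a bijection preserving
tropical addition and scaling). -/
def TropIso {n m : ℕ} (S : Set (Fin n → Trop)) (S' : Set (Fin m → Trop)) : Prop :=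
  ∃ f : (Fin n → Trop) → (Fin m → Trop),
    Set.BijOn f S S' ∧
    (∀ x ∈ S, ∀ y ∈ S, f (x ⊔ y) = f x ⊔ f y) ∧
    (∀ c : Trop, ∀ x ∈ S, f (fun i => c + x i) = fun i => c + f x i)

/-- The `H`-class of a matrix `A` in `M(T)` (among matrices of the same shape),
characterised by equality of column and row spaces. -/
def HSet {n m : ℕ} (A : Fin n → Fin m → Trop) : Set (Fin n → Fin m → Trop) :=
  {B | colSpace B = colSpace A ∧ rowSpace B = rowSpace A}

/-- Adjacency of the coloured bipartite graph `B_A` of a tropical matrix. -/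
def BAdj {r c : ℕ} (A : Fin r → Fin c → Trop) :
    (Fin r ⊕ Fin c) → (Fin r ⊕ Fin c) → Prop
  | Sum.inl i, Sum.inr j => A i j ≠ ⊥
  | Sum.inr j, Sum.inl i => A i j ≠ ⊥
  | _, _ => False

/-- Connectedness of the bipartite graph `B_A`. -/
def BConnected {r c : ℕ} (A : Fin r → Fin c → Trop) : Prop :=
  ∀ x y : Fin r ⊕ Fin c, Relation.ReflTransGen (BAdj A) x y

/-- `lam` is a tropical eigenvalue of `P`. -/
def IsEig {n : ℕ} (P : Fin n → Fin n → Trop) (lam : Trop) : Prop :=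
  ∃ v : Fin n → Trop, v ≠ (fun _ => ⊥) ∧ tvmul P v = fun i => lam + v i

/-- The group `G_A` of monomial matrices `P` with `C(PA) = C(A)`. -/
def GA {r c : ℕ} (A : Fin r → Fin c → Trop) : Set (Fin r → Fin r → Trop) :=
  {P | IsMonomial P ∧ colSpace (tmul P A) = colSpace A}

/-- The dual group `{}_AG` of monomial matrices `Q` with `R(AQ) = R(A)`. -/
def AGr {r c : ℕ} (A : Fin r → Fin c → Trop) : Set (Fin c → Fin c → Trop) :=
  {Q | IsMonomial Q ∧ rowSpace (tmul A Q) = rowSpace A}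

section Semimodule

variable {n m : ℕ}

lemma add_finset_sup {ι : Type*} (s : Finset ι) (f : ι → Trop) (c : Trop) :
    c + s.sup f = s.sup fun i => c + f i :=
  Finset.apply_sup_eq_sup_comp (c + ·) (add_max c) (WithBot.add_bot c)

lemma tvmul_sup (A : Fin n → Fin m → Trop) (x y : Fin m → Trop) :
    tvmul A (x ⊔ y) = tvmul A x ⊔ tvmul A y := by
  funext i
  simp only [tvmul, Pi.sup_apply, add_max]
  exact Finset.sup_sup

lemma tvmul_const_add (A : Fin n → Fin m → Trop) (c : Trop) (x : Fin m → Trop) :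
    tvmul A (fun k => c + x k) = fun i => c + tvmul A x i := by
  funext i
  simp only [tvmul, add_finset_sup, add_left_comm]

lemma tvmul_single (A : Fin n → Fin m → Trop) (j : Fin m) :
    tvmul A (fun k => if k = j then 0 else ⊥) = fun i => A i j := by
  funext i
  simp [tvmul, add_ite, Finset.sup_ite, Finset.filter_eq']

lemma isTropSubmodule_range_tvmul (A : Fin n → Fin m → Trop) :
    IsTropSubmodule (Set.range (tvmul A)) :=
  ⟨by rintro _ ⟨x, rfl⟩ _ ⟨y, rfl⟩; exact ⟨x ⊔ y, tvmul_sup A x y⟩,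
    by rintro c _ ⟨x, rfl⟩; exact ⟨_, tvmul_const_add A c x⟩⟩

lemma isTropSubmodule_fixedPoints_tvmul (A : Fin n → Fin n → Trop) :
    IsTropSubmodule {x | tvmul A x = x} :=
  ⟨fun x (hx : tvmul A x = x) y (hy : tvmul A y = y) =>
      show tvmul A (x ⊔ y) = x ⊔ y by rw [tvmul_sup, hx, hy],
    fun c x (hx : tvmul A x = x) => show tvmul A _ = _ by rw [tvmul_const_add, hx]⟩

lemma IsTropSubmodule.finset_sup_mem {ι : Type*} {S : Set (Fin n → Trop)}
    (hS : IsTropSubmodule S) {s : Finset ι} (hs : s.Nonempty) (c : ι → Trop)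
    (v : ι → Fin n → Trop) (hv : ∀ k ∈ s, v k ∈ S) :
    (fun r => s.sup fun k => c k + v k r) ∈ S := by
  induction hs using Finset.Nonempty.cons_induction with
  | singleton a => simpa using hS.2 (c a) (v a) (hv a (Finset.mem_singleton_self a))
  | cons a s ha hs ih =>
    simp only [Finset.sup_cons]
    exact hS.1 _ (hS.2 (c a) (v a) (hv a (Finset.mem_cons_self a s))) _
      (ih fun k hk => hv k (Finset.mem_cons_of_mem hk))

lemma subset_genBy (G : Set (Fin n → Trop)) : G ⊆ genBy G :=
  fun _ hv => Set.mem_sInter.2 fun _ hS => hS.2 hv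

lemma genBy_subset {G S : Set (Fin n → Trop)} (hS : IsTropSubmodule S) (h : G ⊆ S) :
    genBy G ⊆ S :=
  fun _ hv => Set.mem_sInter.1 hv S ⟨hS, h⟩

lemma isTropSubmodule_genBy (G : Set (Fin n → Trop)) : IsTropSubmodule (genBy G) :=
  ⟨fun x hx y hy => Set.mem_sInter.2 fun S hS =>
      hS.1.1 x (Set.mem_sInter.1 hx S hS) y (Set.mem_sInter.1 hy S hS),
    fun c x hx => Set.mem_sInter.2 fun S hS => hS.1.2 c x (Set.mem_sInter.1 hx S hS)⟩

lemma col_mem_colSpace (A : Fin n → Fin m → Trop) (j : Fin m) :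
    (fun i => A i j) ∈ colSpace A :=
  subset_genBy _ ⟨j, rfl⟩

lemma colSpace_subset_range_tvmul (A : Fin n → Fin m → Trop) :
    colSpace A ⊆ Set.range (tvmul A) :=
  genBy_subset (isTropSubmodule_range_tvmul A) <| by
    rintro _ ⟨j, rfl⟩
    exact ⟨_, tvmul_single A j⟩

lemma colSpace_subset_fixedPoints {E : Fin n → Fin n → Trop} (hidem : tmul E E = E) :
    colSpace E ⊆ {x | tvmul E x = x} :=
  genBy_subset (isTropSubmodule_fixedPoints_tvmul E) (by
    rintro _ ⟨j, rfl⟩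
    funext i
    exact congrFun (congrFun hidem i) j)

end Semimodule

section Monomial

variable {n : ℕ}

def monomialMat (σ : Equiv.Perm (Fin n)) (a : Fin n → ℝ) : Fin n → Fin n → Trop :=
  fun i j => if j = σ i then (a i : Trop) else ⊥

lemma IsMonomial.exists_eq_monomialMat {P : Fin n → Fin n → Trop} (hP : IsMonomial P) :
    ∃ σ a, P = monomialMat σ a := by
  choose f hf hf_unique using hP.1
  have hinj : Function.Injective f := fun i i' h => (hP.2 (f i)).unique (hf i) (h ▸ hf i')
  refine ⟨Equiv.ofBijective f hinj.bijective_of_finite, fun i => (P i (f i)).unbot (hf i), ?_⟩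
  funext i j
  by_cases hj : j = f i
  · subst hj
    simp [monomialMat]
  · simp only [monomialMat, Equiv.ofBijective_apply, if_neg hj]
    by_contra h
    exact hj (hf_unique i j h)

lemma tmul_monomialMat_left (σ : Equiv.Perm (Fin n)) (a : Fin n → ℝ)
    (E : Fin n → Fin n → Trop) (i j : Fin n) :
    tmul (monomialMat σ a) E i j = a i + E (σ i) j := by
  simp [tmul, monomialMat, ite_add, Finset.sup_ite, Finset.filter_eq']

lemma tmul_monomialMat_right (σ : Equiv.Perm (Fin n)) (a : Fin n → ℝ)
    (E : Fin n → Fin n → Trop) (i j : Fin n) :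
    tmul E (monomialMat σ a) i j = E i (σ.symm j) + a (σ.symm j) := by
  simp [tmul, monomialMat, add_ite, Finset.sup_ite, ← Equiv.symm_apply_eq, Finset.filter_eq]

lemma colSpace_tmul_monomialMat (E : Fin n → Fin n → Trop) (σ : Equiv.Perm (Fin n))
    (a : Fin n → ℝ) : colSpace (tmul E (monomialMat σ a)) = colSpace E := by
  apply (genBy_subset (isTropSubmodule_genBy _) _).antisymm
    (genBy_subset (isTropSubmodule_genBy _) _)
  · rintro _ ⟨j, rfl⟩
    simp only [tmul_monomialMat_right, add_comm (E _ _)]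
    exact (isTropSubmodule_genBy _).2 _ _ (col_mem_colSpace E (σ.symm j))
  · rintro _ ⟨k, rfl⟩
    convert (isTropSubmodule_genBy _).2 ((-a k : ℝ) : Trop) _
      (col_mem_colSpace (tmul E (monomialMat σ a)) (σ k)) using 2 with i
    rw [tmul_monomialMat_right, Equiv.symm_apply_apply, add_left_comm, ← WithBot.coe_add,
      neg_add_cancel, WithBot.coe_zero, add_zero]

lemma tmul_comm_of_le_one (hn : n ≤ 1) (A B : Fin n → Fin n → Trop) :
    tmul A B = tmul B A := by
  have : Subsingleton (Fin n) := Fin.subsingleton_iff_le_one.2 hn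
  funext i j
  refine Finset.sup_congr rfl fun k _ => ?_
  obtain rfl := Subsingleton.elim i k
  obtain rfl := Subsingleton.elim j i
  exact add_comm _ _

end Monomial

section FullRankIdempotent

variable {n : ℕ} {E : Fin n → Fin n → Trop}

lemma add_le_of_tmul_self_eq (hidem : tmul E E = E) (i j k : Fin n) :
    E i k + E k j ≤ E i j :=
  (Finset.le_sup (f := fun l => E i l + E l j) (Finset.mem_univ k)).trans_eq
    (congrFun (congrFun hidem i) j)

lemma colRank_lt_of_col_mem_genBy {i : Fin n}
    (h : (fun r => E r i) ∈ genBy ((fun j r => E r j) '' {i}ᶜ)) : colRank E < n := by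
  set G := Finset.image (fun j r => E r j) ({i}ᶜ : Finset (Fin n))
  have hG : genBy ↑G = colSpace E := by
    simp only [G, Finset.coe_image, Finset.coe_compl, Finset.coe_singleton]
    apply (genBy_subset (isTropSubmodule_genBy _) _).antisymm
      (genBy_subset (isTropSubmodule_genBy _) _)
    · rintro _ ⟨j, -, rfl⟩
      exact col_mem_colSpace E j
    · rintro _ ⟨j, rfl⟩
      by_cases hj : j = i
      · exact hj ▸ h
      · exact subset_genBy _ ⟨j, hj, rfl⟩
  have hcard : G.card ≤ n - 1 := by
    simpa [Finset.card_compl] using Finset.card_image_le (s := ({i}ᶜ : Finset (Fin n)))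
  have := i.pos
  have : colRank E ≤ G.card := Nat.sInf_le ⟨G, rfl, hG⟩
  omega

lemma eq_of_eq_add_sup {x e y : Trop} (he : e < 0) (h : x = (x + e) ⊔ y) : x = y := by
  induction x using WithBot.recBotCoe with
  | bot => exact (le_bot_iff.1 (le_sup_right.trans h.ge)).symm
  | coe r =>
    have hlt : (r : Trop) + e < r := by
      simpa using WithBot.add_lt_add_left (WithBot.coe_ne_bot (a := r)) he
    rcases le_total ((r : Trop) + e) y with hle | hle
    · rwa [sup_eq_right.2 hle] at h
    · rw [sup_eq_left.2 hle] at h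
      exact absurd h hlt.ne'

lemma diag_eq_zero (hidem : tmul E E = E) (hc : colRank E = n) (hn : 2 ≤ n) (i : Fin n) :
    E i i = 0 := by
  have hle : E i i ≤ 0 := by
    have h2 := add_le_of_tmul_self_eq hidem i i i
    induction h : E i i using WithBot.recBotCoe with
    | bot => exact bot_le
    | coe r =>
      rw [h, ← WithBot.coe_add, WithBot.coe_le_coe] at h2
      exact WithBot.coe_le_coe.2 (by linarith)
  by_contra hne
  -- with `E i i < 0`, the term `k = i` never attains the maximum in `E r i = max_k E r k + E k i`
  have hcol : ∀ r, E r i = ({i}ᶜ : Finset (Fin n)).sup fun k => E k i + E r k := fun r =>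
    eq_of_eq_add_sup (hle.lt_of_ne hne) <| by
      conv_lhs => rw [← hidem]
      rw [tmul, ← Finset.insert_compl_self i, Finset.sup_insert]
      exact congrArg _ (Finset.sup_congr rfl fun k _ => add_comm _ _)
  refine (colRank_lt_of_col_mem_genBy (i := i) ?_).ne hc
  have hne : ({i}ᶜ : Finset (Fin n)).Nonempty := by
    rw [← Finset.card_pos, Finset.card_compl, Finset.card_singleton, Fintype.card_fin]
    omega
  rw [show (fun r => E r i) = _ from funext hcol]
  exact (isTropSubmodule_genBy _).finset_sup_mem hne _ _
    fun k hk => subset_genBy _ ⟨k, by simpa using hk, rfl⟩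

lemma add_lt_zero_of_ne (hidem : tmul E E = E) (hc : colRank E = n) {i j : Fin n}
    (hij : i ≠ j) : E i j + E j i < 0 := by
  by_contra! hge
  have hcol : (fun r => E r i) = fun r => E j i + E r j := by
    funext r
    refine le_antisymm ?_ (add_comm (E j i) _ ▸ add_le_of_tmul_self_eq hidem r i j)
    calc E r i ≤ (E i j + E j i) + E r i := le_add_of_nonneg_left hge
      _ = E j i + (E r i + E i j) := by ac_rfl
      _ ≤ E j i + E r j := add_le_add le_rfl (add_le_of_tmul_self_eq hidem r j i)
  refine (colRank_lt_of_col_mem_genBy (i := i) ?_).ne hc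
  rw [hcol]
  exact (isTropSubmodule_genBy _).2 _ _ (subset_genBy _ ⟨j, Ne.symm hij, rfl⟩)

end FullRankIdempotent

section PermSum

variable {ι M : Type*} [Fintype ι] [DecidableEq ι] [AddCommMonoid M] {A : ι → ι → M}

lemma sum_swap_apply (hdiag : ∀ i, A i i = 0) {x y : ι} (hxy : x ≠ y) :
    ∑ k, A (Equiv.swap x y k) k = A y x + A x y := by
  rw [← Finset.sum_add_sum_compl {x, y}, Finset.sum_pair hxy, Equiv.swap_apply_left,
    Equiv.swap_apply_right, Finset.sum_eq_zero, add_zero]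
  intro k hk
  simp only [Finset.mem_compl, Finset.mem_insert, Finset.mem_singleton, not_or] at hk
  rw [Equiv.swap_apply_of_ne_of_ne hk.1 hk.2, hdiag]

variable [PartialOrder M] [IsOrderedAddMonoid M]

lemma sum_perm_le_sum_swap_mul (hdiag : ∀ i, A i i = 0)
    (htri : ∀ i j k, A i k + A k j ≤ A i j) (ρ : Equiv.Perm ι) {x : ι} (hx : ρ x ≠ x) :
    ∑ k, A (ρ k) k ≤ ∑ k, A ((Equiv.swap x (ρ x) * ρ) k) k := by
  set y := ρ.symm x
  have hρy : ρ y = x := ρ.apply_symm_apply x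
  have hxy : x ≠ y := fun h => hx (h ▸ hρy)
  have hrest : ∀ k ∈ ({x, y} : Finset ι)ᶜ, A ((Equiv.swap x (ρ x) * ρ) k) k = A (ρ k) k := by
    intro k hk
    simp only [Finset.mem_compl, Finset.mem_insert, Finset.mem_singleton, not_or] at hk
    rw [Equiv.Perm.mul_apply, Equiv.swap_apply_of_ne_of_ne
      (fun h => hk.2 (ρ.eq_symm_apply.2 h)) (ρ.injective.ne hk.1)]
  rw [← Finset.sum_add_sum_compl {x, y}, ← Finset.sum_add_sum_compl {x, y}
    (fun k => A ((Equiv.swap x (ρ x) * ρ) k) k), Finset.sum_pair hxy, Finset.sum_pair hxy,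
    Finset.sum_congr rfl hrest]
  refine add_le_add ?_ le_rfl
  simp only [Equiv.Perm.mul_apply, hρy, Equiv.swap_apply_right, Equiv.swap_apply_left, hdiag,
    zero_add]
  exact htri _ _ _

lemma sum_perm_lt_zero (hdiag : ∀ i, A i i = 0) (htri : ∀ i j k, A i k + A k j ≤ A i j)
    (hstrict : ∀ i j, i ≠ j → A i j + A j i < 0) {ρ : Equiv.Perm ι} (hρ : ρ ≠ 1) :
    ∑ k, A (ρ k) k < 0 := by
  induction h : ρ.support.card using Nat.strong_induction_on generalizing ρ with
  | _ N ih =>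
  obtain ⟨x, hx⟩ : ∃ x, ρ x ≠ x := by
    by_contra! hfix
    exact hρ (Equiv.ext hfix)
  by_cases h1 : Equiv.swap x (ρ x) * ρ = 1
  · rw [eq_inv_of_mul_eq_one_right h1, Equiv.swap_inv, sum_swap_apply hdiag hx.symm]
    exact hstrict _ _ hx
  · exact (sum_perm_le_sum_swap_mul hdiag htri ρ hx).trans_lt
      (ih _ (h ▸ Equiv.Perm.card_support_swap_mul hx) h1 rfl)

end PermSum

lemma exists_col_eq_const_add_col {n m : ℕ} {E : Fin n → Fin n → Trop} {A : Fin n → Fin m → Trop}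
    {k : Fin n} (hkk : E k k = 0) (hA : ∀ j, tvmul E (fun i => A i j) = fun i => A i j)
    (hk : (fun i => E i k) ∈ Set.range (tvmul A)) :
    ∃ (j : Fin m) (μ : ℝ), ∀ i, E i k = μ + A i j := by
  obtain ⟨d, hd⟩ := hk
  have hsup : (Finset.univ.sup fun j => A k j + d j) = 0 := (congrFun hd k).trans hkk
  have hne : (Finset.univ : Finset (Fin m)).Nonempty :=
    Finset.nonempty_iff_ne_empty.2 fun h => by simp [h] at hsup
  obtain ⟨j, -, hj⟩ := Finset.exists_mem_eq_sup Finset.univ hne fun j => A k j + d j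
  have hj0 : A k j + d j = 0 := hj.symm.trans hsup
  obtain ⟨μ, hμ⟩ := WithBot.ne_bot_iff_exists.1 fun h : d j = ⊥ => by
    simp [h] at hj0
  refine ⟨j, μ, fun i => le_antisymm ?_ ?_⟩
  · calc E i k = d j + (E i k + A k j) := by
          conv_lhs => rw [← add_zero (E i k), ← hj0]
          ac_rfl
      _ ≤ d j + A i j := add_le_add le_rfl <|
          (Finset.le_sup (f := fun l => E i l + A l j) (Finset.mem_univ k)).trans_eq
            (congrFun (hA j) i)
      _ = μ + A i j := by rw [hμ]
  · calc μ + A i j = A i j + d j := by rw [hμ, add_comm]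
      _ ≤ tvmul A d i := Finset.le_sup (f := fun l => A i l + d l) (Finset.mem_univ j)
      _ = E i k := congrFun hd i

lemma eq_of_forall_eq_add {ι : Type*} {E : ι → ι → Trop} (hdiag : ∀ i, E i i = 0)
    (hstrict : ∀ i j, i ≠ j → E i j + E j i < 0) {k k' : ι} {μ μ' : Trop} {c : ι → Trop}
    (h : ∀ i, E i k = μ + c i) (h' : ∀ i, E i k' = μ' + c i) : k = k' := by
  by_contra hne
  have hzero : E k' k + E k k' = E k k + E k' k' := by
    simp only [h, h']
    ac_rfl
  have := hstrict k' k (Ne.symm hne)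
  rw [hzero, hdiag, hdiag, add_zero] at this
  exact lt_irrefl _ this

/-- The potentials `a`, `μ` cancel on the weights of the permutations `σ⁻¹ * g` and `σ * g⁻¹`,
whose total is therefore zero. -/
lemma eq_of_forall_eq_add_add {ι : Type*} [Fintype ι] [DecidableEq ι]
    {E : ι → ι → Trop} (hdiag : ∀ i, E i i = 0) (htri : ∀ i j k, E i k + E k j ≤ E i j)
    (hstrict : ∀ i j, i ≠ j → E i j + E j i < 0) {σ g : Equiv.Perm ι} {a μ : ι → ℝ}
    (h : ∀ i k, E i k = μ k + (a i + E (σ i) (g k))) : g = σ := by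
  have hshift : ∀ k, E ((σ⁻¹ * g) k) k = ((μ k + a ((σ⁻¹ * g) k) : ℝ) : Trop) := fun k => by
    rw [h, Equiv.Perm.mul_apply, Equiv.Perm.inv_def, Equiv.apply_symm_apply, hdiag, add_zero,
      WithBot.coe_add]
  have hdiag' : ∀ k, ((μ k + a k : ℝ) : Trop) + E (σ k) (g k) = 0 := fun k => by
    rw [WithBot.coe_add, add_assoc, ← h, hdiag]
  have hX : ∑ k, E ((σ⁻¹ * g) k) k = ((∑ k, (μ k + a k) : ℝ) : Trop) := by
    rw [Finset.sum_congr rfl fun k _ => hshift k, ← WithBot.coe_sum, Finset.sum_add_distrib,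
      Finset.sum_add_distrib, Equiv.sum_comp (σ⁻¹ * g) a]
  have hY : ((∑ k, (μ k + a k) : ℝ) : Trop) + ∑ k, E ((σ * g⁻¹) k) k = 0 := by
    rw [← Equiv.sum_comp g (fun k => E ((σ * g⁻¹) k) k), WithBot.coe_sum,
      ← Finset.sum_add_distrib]
    simpa [Equiv.Perm.mul_apply] using Finset.sum_congr rfl fun k _ => hdiag' k
  by_contra hne
  have hlt := add_neg_of_neg_of_nonpos
    (sum_perm_lt_zero hdiag htri hstrict (mt inv_mul_eq_one.1 (Ne.symm hne)))
    (sum_perm_lt_zero hdiag htri hstrict (mt mul_inv_eq_one.1 (Ne.symm hne))).le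
  rw [hX, hY] at hlt
  exact lt_irrefl _ hlt

lemma tmul_comm_of_colSpace_eq {n : ℕ} {E P : Fin n → Fin n → Trop} (hidem : tmul E E = E)
    (hc : colRank E = n) (hn : 2 ≤ n) (hP : IsMonomial P)
    (hcol : colSpace (tmul P E) = colSpace E) : tmul P E = tmul E P := by
  obtain ⟨σ, a, rfl⟩ := hP.exists_eq_monomialMat
  have hdiag := diag_eq_zero hidem hc hn
  have hstrict : ∀ i j, i ≠ j → E i j + E j i < 0 := fun _ _ => add_lt_zero_of_ne hidem hc
  have hext : ∀ k, ∃ j, ∃ μ : ℝ, ∀ i, E i k = μ + tmul (monomialMat σ a) E i j := fun k =>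
    exists_col_eq_const_add_col (hdiag k)
      (fun j => colSpace_subset_fixedPoints hidem (hcol ▸ col_mem_colSpace _ j))
      (colSpace_subset_range_tvmul _ (hcol ▸ col_mem_colSpace E k))
  choose g μ hg using hext
  have hinj : Function.Injective g := fun k k' hkk' =>
    eq_of_forall_eq_add hdiag hstrict (hg k) (hkk' ▸ hg k')
  have hσ := eq_of_forall_eq_add_add hdiag (add_le_of_tmul_self_eq hidem) hstrict
    (g := Equiv.ofBijective g hinj.bijective_of_finite) (σ := σ) (a := a) (μ := μ)
    (fun i k => by simpa [tmul_monomialMat_left] using hg k i)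
  have hgσ : ∀ k, g k = σ k := Equiv.ext_iff.1 hσ
  have hμ : ∀ k, (μ k : Trop) + a k = 0 := fun k => by
    simpa [tmul_monomialMat_left, hgσ, hdiag, add_assoc] using (hg k k).symm
  funext i j
  obtain ⟨k, rfl⟩ := σ.surjective j
  rw [tmul_monomialMat_left, tmul_monomialMat_right, Equiv.symm_apply_apply, hg k i,
    tmul_monomialMat_left, hgσ, add_right_comm, hμ, zero_add]

theorem stmt_15_general {n : ℕ} (E : Fin n → Fin n → Trop)
    (hidem : tmul E E = E) (hc : colRank E = n) :
    {P : Fin n → Fin n → Trop | IsMonomial P ∧ colSpace (tmul P E) = colSpace E} =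
    {P : Fin n → Fin n → Trop | IsMonomial P ∧ tmul P E = tmul E P} := by
  ext P
  refine ⟨fun ⟨hP, hcol⟩ => ⟨hP, ?_⟩, fun ⟨hP, hcomm⟩ => ⟨hP, ?_⟩⟩
  · rcases lt_or_ge n 2 with hn | hn
    · exact tmul_comm_of_le_one (by omega) P E
    · exact tmul_comm_of_colSpace_eq hidem hc hn hP hcol
  · obtain ⟨σ, a, rfl⟩ := hP.exists_eq_monomialMat
    rw [hcomm, colSpace_tmul_monomialMat]

/-- For a full rank idempotent `E ∈ M_n(T)`, the monomial matrices `P`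
with `C(PE) = C(E)` are exactly the monomial matrices commuting with `E`. -/
theorem stmt_15 {n : ℕ} (E : Fin n → Fin n → Trop)
    (hidem : tmul E E = E) (hr : rowRank E = n) (hc : colRank E = n) :
    {P : Fin n → Fin n → Trop | IsMonomial P ∧ colSpace (tmul P E) = colSpace E} =
    {P : Fin n → Fin n → Trop | IsMonomial P ∧ tmul P E = tmul E P} :=
  stmt_15_general E hidem hc
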